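/- arXiv:1602.07180 — 3 statements merged into one kernel-verified Lean document; each statement's English description precedes it below -/
import Mathlib

section
/- Let s > 1 and t > 1, and let X and Y be independent random variables following the Zeta laws of parameters s and t respectively. Then the greatest common divisor X ∧ Y = gcd(X, Y) follows the Zeta law of parameter s + t. -/
open MeasureTheory ProbabilityTheory
open scoped ENNReal

/-- The sum `ζ(s) = ∑_{n ≥ 1} n ^ (-s)` (the `n = 0` term vanishes since `0 ^ (-s) = 0`). -/
noncomputable def zetaSum (s : ℝ) : ℝ := ∑' n : ℕ, (n : ℝ) ^ (-s)

/-- The Zeta law of parameter `s`: the probability measure on the positive integers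
assigning mass `n ^ (-s) / ζ(s)` to each `n ≥ 1`. -/
noncomputable def zetaMeasure (s : ℝ) : Measure ℕ :=
  Measure.count.withDensity fun n => ENNReal.ofReal ((n : ℝ) ^ (-s) / zetaSum s)

noncomputable def Gz (s : ℝ) (n : ℕ) : ℝ≥0∞ := ENNReal.ofReal ((n : ℝ) ^ (-s))

lemma Gz_zero {s : ℝ} (hs : s ≠ 0) : Gz s 0 = 0 := by
  simp [Gz, Real.zero_rpow (neg_ne_zero.2 hs)]

lemma Gz_one (s : ℝ) : Gz s 1 = 1 := by simp [Gz]

lemma Gz_mul (s : ℝ) (a b : ℕ) : Gz s (a * b) = Gz s a * Gz s b := by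
  simp only [Gz, Nat.cast_mul]
  rw [Real.mul_rpow (Nat.cast_nonneg a) (Nat.cast_nonneg b),
    ENNReal.ofReal_mul (Real.rpow_nonneg (Nat.cast_nonneg a) _)]

lemma Gz_add {s t : ℝ} (n : ℕ) (hn : 0 < n) : Gz (s + t) n = Gz s n * Gz t n := by
  have hn' : (0:ℝ) < (n:ℝ) := by exact_mod_cast hn
  simp only [Gz, neg_add]
  rw [Real.rpow_add hn', ENNReal.ofReal_mul (Real.rpow_nonneg (le_of_lt hn') _)]

lemma summable_Gz {s : ℝ} (hs : 1 < s) : Summable (fun n : ℕ => (n : ℝ) ^ (-s)) :=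
  Real.summable_nat_rpow.2 (by linarith)

lemma zetaSum_pos {s : ℝ} (hs : 1 < s) : 0 < zetaSum s := by
  have h1 : ((1:ℕ):ℝ) ^ (-s) ≤ zetaSum s :=
    Summable.le_tsum (summable_Gz hs) 1 (fun n _ => Real.rpow_nonneg (Nat.cast_nonneg n) _)
  simpa using lt_of_lt_of_le (by norm_num) h1

lemma tsum_Gz {s : ℝ} (hs : 1 < s) : ∑' n : ℕ, Gz s n = ENNReal.ofReal (zetaSum s) := by
  rw [zetaSum, ENNReal.ofReal_tsum_of_nonneg (fun n => Real.rpow_nonneg (Nat.cast_nonneg n) _)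
    (summable_Gz hs)]
  rfl

/-- the equivalence between coprime pairs and pairs with gcd `n`, for `n > 0`. -/
def gcdFiberEquiv (n : ℕ) (hn : 0 < n) :
    {q : ℕ × ℕ // Nat.gcd q.1 q.2 = 1} ≃ {p : ℕ × ℕ // Nat.gcd p.1 p.2 = n} where
  toFun q := ⟨(n * q.1.1, n * q.1.2), by
    simp [Nat.gcd_mul_left, q.2]⟩
  invFun p := ⟨(p.1.1 / n, p.1.2 / n), by
    have h := p.2
    have : Nat.gcd (p.1.1 / Nat.gcd p.1.1 p.1.2) (p.1.2 / Nat.gcd p.1.1 p.1.2) = 1 :=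
      Nat.coprime_div_gcd_div_gcd (by rw [h]; exact hn)
    rwa [h] at this⟩
  left_inv q := by
    ext <;> simp [Nat.mul_div_cancel_left _ hn]
  right_inv p := by
    have h1 : n ∣ p.1.1 := by have := Nat.gcd_dvd_left (p.1).1 (p.1).2; rwa [p.2] at this
    have h2 : n ∣ p.1.2 := by have := Nat.gcd_dvd_right (p.1).1 (p.1).2; rwa [p.2] at this
    ext <;> simp [Nat.mul_div_cancel' h1, Nat.mul_div_cancel' h2]

lemma fiber_sum {s t : ℝ} (hs : 1 < s) (ht : 1 < t) (n : ℕ) :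
    ∑' p : {p : ℕ × ℕ // Nat.gcd p.1 p.2 = n}, Gz s (p.1).1 * Gz t (p.1).2
      = Gz (s + t) n *
        ∑' q : {q : ℕ × ℕ // Nat.gcd q.1 q.2 = 1}, Gz s (q.1).1 * Gz t (q.1).2 := by
  rcases Nat.eq_zero_or_pos n with rfl | hn
  · have h0 : ∀ p : {p : ℕ × ℕ // Nat.gcd p.1 p.2 = 0}, Gz s (p.1).1 * Gz t (p.1).2 = 0 := by
      rintro ⟨⟨a, b⟩, hp⟩
      have ha : a = 0 := Nat.eq_zero_of_gcd_eq_zero_left hp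
      simp [ha, Gz_zero (by linarith : s ≠ 0)]
    rw [tsum_congr h0, Gz_zero (by linarith : s + t ≠ 0)]
    simp
  · rw [← (gcdFiberEquiv n hn).tsum_eq (fun p => Gz s (p.1).1 * Gz t (p.1).2)]
    rw [← ENNReal.tsum_mul_left]
    refine tsum_congr fun q => ?_
    show Gz s (n * (q.1).1) * Gz t (n * (q.1).2) = _
    rw [Gz_mul, Gz_mul, Gz_add n hn]
    ring

lemma prod_identity {s t : ℝ} (hs : 1 < s) (ht : 1 < t) :
    (∑' n : ℕ, Gz s n) * (∑' n : ℕ, Gz t n)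
      = (∑' n : ℕ, Gz (s + t) n) *
        ∑' q : {q : ℕ × ℕ // Nat.gcd q.1 q.2 = 1}, Gz s (q.1).1 * Gz t (q.1).2 := by
  have h1 : (∑' n : ℕ, Gz s n) * (∑' n : ℕ, Gz t n)
      = ∑' p : ℕ × ℕ, Gz s p.1 * Gz t p.2 := by
    rw [ENNReal.tsum_prod']
    rw [← ENNReal.tsum_mul_right]
    exact tsum_congr fun a => by rw [← ENNReal.tsum_mul_left]
  rw [h1, ← (Equiv.sigmaFiberEquiv (fun p : ℕ × ℕ => Nat.gcd p.1 p.2)).tsum_eq,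
    ENNReal.tsum_sigma', ← ENNReal.tsum_mul_right]
  exact tsum_congr fun d => fiber_sum hs ht d

lemma zetaMeasure_apply (s : ℝ) (A : Set ℕ) :
    zetaMeasure s A = ∑' n : A, ENNReal.ofReal (((n : ℕ) : ℝ) ^ (-s) / zetaSum s) := by
  rw [zetaMeasure, withDensity_apply _ (MeasurableSet.of_discrete),
    lintegral_countable _ (Set.to_countable A)]
  simp [Measure.count_singleton]

instance : SFinite (Measure.count : Measure ℕ) := by
  rw [Measure.count]; infer_instance

instance zetaMeasure_sfinite (s : ℝ) : SFinite (zetaMeasure s) := by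
  unfold zetaMeasure; infer_instance

lemma zetaMeasure_singleton (s : ℝ) (n : ℕ) :
    zetaMeasure s {n} = ENNReal.ofReal ((n : ℝ) ^ (-s) / zetaSum s) := by
  rw [zetaMeasure_apply,
    tsum_singleton n (fun m : ℕ => ENNReal.ofReal ((m : ℝ) ^ (-s) / zetaSum s))]

lemma Fm_eq {s : ℝ} (hs : 1 < s) (n : ℕ) :
    ENNReal.ofReal ((n : ℝ) ^ (-s) / zetaSum s)
      = Gz s n * (ENNReal.ofReal (zetaSum s))⁻¹ := by
  rw [ENNReal.ofReal_div_of_pos (zetaSum_pos hs), div_eq_mul_inv]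
  rfl

lemma prod_apply_eq {s t : ℝ} (hs : 1 < s) (ht : 1 < t) (S : Set (ℕ × ℕ)) :
    (zetaMeasure s).prod (zetaMeasure t) S
      = ∑' p : S, ENNReal.ofReal (((p.1).1 : ℝ) ^ (-s) / zetaSum s)
          * ENNReal.ofReal (((p.1).2 : ℝ) ^ (-t) / zetaSum t) := by
  rw [Measure.prod_apply (MeasurableSet.of_discrete), lintegral_countable' ]
  have key : ∀ a : ℕ, zetaMeasure t (Prod.mk a ⁻¹' S) * zetaMeasure s {a}
      = ∑' b : ℕ, S.indicator
          (fun p : ℕ × ℕ => ENNReal.ofReal ((p.1 : ℝ) ^ (-s) / zetaSum s)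
            * ENNReal.ofReal ((p.2 : ℝ) ^ (-t) / zetaSum t)) (a, b) := by
    intro a
    rw [zetaMeasure_apply, zetaMeasure_singleton,
      tsum_subtype (Prod.mk a ⁻¹' S) (fun b : ℕ => ENNReal.ofReal ((b : ℝ) ^ (-t) / zetaSum t)),
      ← ENNReal.tsum_mul_right]
    refine tsum_congr fun b => ?_
    by_cases hab : (a, b) ∈ S
    · rw [Set.indicator_of_mem hab, Set.indicator_of_mem (by exact hab)]
      ring
    · rw [Set.indicator_of_notMem hab, Set.indicator_of_notMem (by exact hab), zero_mul]
  rw [tsum_congr key, ← ENNReal.tsum_prod',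
    tsum_subtype S (fun p : ℕ × ℕ => ENNReal.ofReal (((p : ℕ × ℕ).1 : ℝ) ^ (-s) / zetaSum s)
      * ENNReal.ofReal (((p : ℕ × ℕ).2 : ℝ) ^ (-t) / zetaSum t))]

/-- If `X` and `Y` are independent random variables following the Zeta laws of parameters
`s > 1` and `t > 1` respectively, then `gcd (X, Y)` follows the Zeta law of parameter
`s + t`. -/
theorem gcd_of_indep_zeta {Ω : Type*} [MeasurableSpace Ω] (μ : Measure Ω)
    [IsProbabilityMeasure μ] (s t : ℝ) (hs : 1 < s) (ht : 1 < t) (X Y : Ω → ℕ)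
    (hX : Measurable X) (hY : Measurable Y) (hXY : IndepFun X Y μ)
    (hlX : μ.map X = zetaMeasure s) (hlY : μ.map Y = zetaMeasure t) :
    μ.map (fun ω => Nat.gcd (X ω) (Y ω)) = zetaMeasure (s + t) := by
  have hst : 1 < s + t := by linarith
  have hmap : μ.map (fun ω => (X ω, Y ω)) = (zetaMeasure s).prod (zetaMeasure t) := by
    rw [← hlX, ← hlY]
    exact (indepFun_iff_map_prod_eq_prod_map_map hX.aemeasurable hY.aemeasurable).1 hXY
  have hgcd : Measurable (fun p : ℕ × ℕ => Nat.gcd p.1 p.2) := measurable_of_countable _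
  have hcomp : (fun ω => Nat.gcd (X ω) (Y ω))
      = (fun p : ℕ × ℕ => Nat.gcd p.1 p.2) ∘ (fun ω => (X ω, Y ω)) := rfl
  rw [hcomp, ← Measure.map_map hgcd (hX.prodMk hY), hmap]
  refine Measure.ext_iff_singleton.2 fun n => ?_
  rw [Measure.map_apply hgcd (measurableSet_singleton n), prod_apply_eq hs ht,
    zetaMeasure_singleton]
  have hterm : ∀ p : ((fun p : ℕ × ℕ => Nat.gcd p.1 p.2) ⁻¹' {n} : Set (ℕ × ℕ)),
      ENNReal.ofReal ((((p : ℕ × ℕ)).1 : ℝ) ^ (-s) / zetaSum s)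
        * ENNReal.ofReal ((((p : ℕ × ℕ)).2 : ℝ) ^ (-t) / zetaSum t)
      = (Gz s ((p : ℕ × ℕ)).1 * Gz t ((p : ℕ × ℕ)).2)
          * ((ENNReal.ofReal (zetaSum s))⁻¹ * (ENNReal.ofReal (zetaSum t))⁻¹) := by
    intro p
    rw [Fm_eq hs, Fm_eq ht]
    ring
  rw [tsum_congr hterm, ENNReal.tsum_mul_right]
  have hfib : ∑' p : ((fun p : ℕ × ℕ => Nat.gcd p.1 p.2) ⁻¹' {n} : Set (ℕ × ℕ)),
      Gz s ((p : ℕ × ℕ)).1 * Gz t ((p : ℕ × ℕ)).2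
      = Gz (s + t) n *
        ∑' q : {q : ℕ × ℕ // Nat.gcd q.1 q.2 = 1}, Gz s (q.1).1 * Gz t (q.1).2 :=
    fiber_sum hs ht n
  rw [hfib, Fm_eq hst]
  set C := ∑' q : {q : ℕ × ℕ // Nat.gcd q.1 q.2 = 1}, Gz s (q.1).1 * Gz t (q.1).2 with hCdef
  have hZsne : (ENNReal.ofReal (zetaSum s)) ≠ 0 := (ENNReal.ofReal_pos.2 (zetaSum_pos hs)).ne'
  have hZtne : (ENNReal.ofReal (zetaSum t)) ≠ 0 := (ENNReal.ofReal_pos.2 (zetaSum_pos ht)).ne'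
  have hZstne : (ENNReal.ofReal (zetaSum (s + t))) ≠ 0 :=
    (ENNReal.ofReal_pos.2 (zetaSum_pos hst)).ne'
  have hZZ : ENNReal.ofReal (zetaSum s) * ENNReal.ofReal (zetaSum t)
      = ENNReal.ofReal (zetaSum (s + t)) * C := by
    rw [← tsum_Gz hs, ← tsum_Gz ht, ← tsum_Gz hst]
    exact prod_identity hs ht
  have hCne : C ≠ 0 := by
    have h1 : (1 : ℝ≥0∞) ≤ C := by
      have := ENNReal.le_tsum
        (f := fun q : {q : ℕ × ℕ // Nat.gcd q.1 q.2 = 1} => Gz s (q.1).1 * Gz t (q.1).2)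
        ⟨(1, 1), by simp⟩
      simpa [Gz_one] using this
    exact fun h => by simp [h] at h1
  have hCtop : C ≠ ⊤ := by
    intro h
    rw [h, ENNReal.mul_top hZstne] at hZZ
    exact (ENNReal.mul_ne_top ENNReal.ofReal_ne_top ENNReal.ofReal_ne_top) hZZ
  have key : C * ((ENNReal.ofReal (zetaSum s))⁻¹ * (ENNReal.ofReal (zetaSum t))⁻¹)
      = (ENNReal.ofReal (zetaSum (s + t)))⁻¹ := by
    rw [← ENNReal.mul_inv (Or.inl hZsne) (Or.inr hZtne), hZZ,
      ENNReal.mul_inv (Or.inl hZstne) (Or.inr hCne), ← mul_assoc, mul_comm C,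
      mul_assoc, ENNReal.mul_inv_cancel hCne hCtop, mul_one]
  rw [mul_assoc, key]
end

section
/- The natural density of pairs of coprime integers is 6/π²: if Pₙ denotes the proportion of pairs (x, y) ∈ {1,…,n}² with gcd(x, y) = 1, i.e., Pₙ = #{(x,y) ∈ {1,…,n}² : gcd(x,y) = 1} / n², then Pₙ → 6/π² as n → ∞. -/
open Filter Topology Real Finset ArithmeticFunction
open scoped ArithmeticFunction.Moebius

/-!
Möbius inversion, `∑_{d ∣ gcd(x, y)} μ d = [gcd(x, y) = 1]`, counts the coprime pairs in `[1, n]²`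
as `∑_{d ≤ n} μ d ⌊n / d⌋²`. After division by `n²` the `d`-th term tends to `μ d / d²` and is
bounded by `1 / d²`, so by dominated convergence the proportion tends to
`∑ μ d / d² = 1 / ζ(2) = 6 / π²`.
-/

theorem sum_divisors_moebius_eq_ite {R : Type*} [Ring R] (m : ℕ) :
    ∑ d ∈ m.divisors, (μ d : R) = if m = 1 then 1 else 0 := by
  have h : ∑ d ∈ m.divisors, μ d = if m = 1 then 1 else 0 := by
    rw [← coe_mul_zeta_apply, moebius_mul_coe_zeta, one_apply]
  rw [← Int.cast_sum, h, apply_ite (Int.cast : ℤ → R), Int.cast_one, Int.cast_zero]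

theorem card_filter_dvd_Icc (n d : ℕ) : #{x ∈ Icc 1 n | d ∣ x} = n / d :=
  Nat.Ioc_filter_dvd_card_eq_div n d

theorem card_filter_dvd_dvd_Icc_sq (n d : ℕ) :
    #{p ∈ Icc 1 n ×ˢ Icc 1 n | d ∣ p.1 ∧ d ∣ p.2} = (n / d) ^ 2 := by
  rw [filter_product, card_product, card_filter_dvd_Icc, sq]

theorem card_coprime_pairs_Icc_eq_sum_moebius {R : Type*} [Ring R] (n : ℕ) :
    (#{p ∈ Icc 1 n ×ˢ Icc 1 n | Nat.gcd p.1 p.2 = 1} : R) =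
      ∑ d ∈ Icc 1 n, (μ d : R) * ((n / d : ℕ) : R) ^ 2 := by
  calc (#{p ∈ Icc 1 n ×ˢ Icc 1 n | Nat.gcd p.1 p.2 = 1} : R)
      = ∑ p ∈ Icc 1 n ×ˢ Icc 1 n, ∑ d ∈ (Nat.gcd p.1 p.2).divisors, (μ d : R) := by
        simp only [sum_divisors_moebius_eq_ite, sum_boole]
    _ = ∑ d ∈ Icc 1 n, ∑ p ∈ Icc 1 n ×ˢ Icc 1 n with d ∣ p.1 ∧ d ∣ p.2, (μ d : R) := by
        refine sum_comm' fun p d => ?_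
        simp only [mem_filter, mem_product, mem_Icc, Nat.mem_divisors, Nat.dvd_gcd_iff,
          ne_eq, Nat.gcd_eq_zero_iff]
        constructor
        · rintro ⟨⟨⟨h1, hn1⟩, h2, hn2⟩, ⟨hd1, hd2⟩, -⟩
          have hd_le := Nat.le_of_dvd h1 hd1
          have hd_pos := Nat.pos_of_dvd_of_pos hd1 h1
          exact ⟨⟨⟨⟨h1, hn1⟩, h2, hn2⟩, hd1, hd2⟩, by omega, by omega⟩
        · rintro ⟨⟨⟨⟨h1, hn1⟩, h2, hn2⟩, hd1, hd2⟩, -⟩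
          exact ⟨⟨⟨h1, hn1⟩, h2, hn2⟩, ⟨hd1, hd2⟩, by omega⟩
    _ = ∑ d ∈ Icc 1 n, (μ d : R) * ((n / d : ℕ) : R) ^ 2 := by
        refine sum_congr rfl fun d _ => ?_
        rw [sum_const, card_filter_dvd_dvd_Icc_sq, nsmul_eq_mul', Nat.cast_pow]

theorem natCast_div_div_le (n d : ℕ) : ((n / d : ℕ) : ℝ) / n ≤ 1 / d := by
  rcases eq_or_ne n 0 with rfl | hn
  · simp
  calc ((n / d : ℕ) : ℝ) / n ≤ (n / d : ℝ) / n := by gcongr; exact Nat.cast_div_le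
    _ = 1 / d := by field_simp

theorem tendsto_natCast_div_div_atTop (d : ℕ) :
    Tendsto (fun n : ℕ => ((n / d : ℕ) : ℝ) / n) atTop (𝓝 (1 / d)) := by
  rcases eq_or_ne d 0 with rfl | hd
  · simp
  have hfloor : Tendsto (fun n : ℕ => (⌊(n / d : ℝ)⌋₊ : ℝ) / (n / d : ℝ) * (1 / d)) atTop
      (𝓝 (1 * (1 / d))) :=
    ((tendsto_nat_floor_div_atTop.comp
      ((tendsto_natCast_atTop_atTop).atTop_div_const (by positivity))).mul_const _)
  rw [one_mul] at hfloor
  refine hfloor.congr' ?_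
  filter_upwards [eventually_ne_atTop 0] with n hn
  rw [Nat.floor_div_eq_div]
  field_simp

theorem abs_moebius_mul_natCast_div_div_sq_le (n d : ℕ) :
    |(μ d : ℝ) * (((n / d : ℕ) : ℝ) / n) ^ 2| ≤ 1 / (d : ℝ) ^ 2 := by
  have hμ : |(μ d : ℝ)| ≤ 1 := by exact_mod_cast abs_moebius_le_one
  have hratio : (((n / d : ℕ) : ℝ) / n) ^ 2 ≤ (1 / d) ^ 2 :=
    pow_le_pow_left₀ (by positivity) (natCast_div_div_le n d) 2
  calc |(μ d : ℝ) * (((n / d : ℕ) : ℝ) / n) ^ 2| = |(μ d : ℝ)| * (((n / d : ℕ) : ℝ) / n) ^ 2 := by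
        rw [abs_mul, abs_sq]
    _ ≤ 1 * (1 / d) ^ 2 := mul_le_mul hμ hratio (sq_nonneg _) zero_le_one
    _ = 1 / (d : ℝ) ^ 2 := by rw [one_mul, one_div_pow]

theorem LSeries_moebius_eq_inv_riemannZeta {s : ℂ} (hs : 1 < s.re) :
    LSeries (fun n => μ n) s = (riemannZeta s)⁻¹ :=
  eq_inv_of_mul_eq_one_right (LSeries_zeta_eq_riemannZeta hs ▸ LSeries_zeta_mul_Lseries_moebius hs)

theorem hasSum_moebius_div_sq : HasSum (fun d : ℕ => (μ d : ℝ) / d ^ 2) (6 / π ^ 2) := by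
  have h := ((LSeriesSummable_moebius_iff (s := 2)).mpr (by norm_num)).LSeriesHasSum
  rw [LSeriesHasSum, LSeries_moebius_eq_inv_riemannZeta (by norm_num), riemannZeta_two,
    inv_div] at h
  rw [← Complex.hasSum_ofReal]
  convert h using 1
  · funext d
    rcases eq_or_ne d 0 with rfl | hd
    · simp
    rw [LSeries.term_of_ne_zero hd]
    push_cast
    norm_cast
  · push_cast; rfl

/-- The natural density of pairs of coprime integers is `6 / π²`: the proportion of pairs
`(x, y) ∈ {1, …, n}²` with `gcd (x, y) = 1` tends to `6 / π²`. -/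
theorem coprime_pairs_density :
    Tendsto (fun n : ℕ =>
        ((((Finset.Icc 1 n) ×ˢ (Finset.Icc 1 n)).filter
            fun p => Nat.gcd p.1 p.2 = 1).card : ℝ) / (n : ℝ) ^ 2)
      atTop (𝓝 (6 / π ^ 2)) := by
  have hlim : Tendsto (fun n : ℕ => ∑' d : ℕ, (μ d : ℝ) * (((n / d : ℕ) : ℝ) / n) ^ 2) atTop
      (𝓝 (∑' d : ℕ, (μ d : ℝ) / d ^ 2)) := by
    refine tendsto_tsum_of_dominated_convergence (summable_one_div_nat_pow.mpr one_lt_two)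
      (fun d => ?_) (.of_forall abs_moebius_mul_natCast_div_div_sq_le)
    simpa [div_eq_mul_inv] using ((tendsto_natCast_div_div_atTop d).pow 2).const_mul (μ d : ℝ)
  rw [hasSum_moebius_div_sq.tsum_eq] at hlim
  refine hlim.congr fun n => ?_
  -- both `d = 0` and `d > n` give `n / d = 0` in `ℕ`
  have hvanish : ∀ d ∉ Icc 1 n, (μ d : ℝ) * (((n / d : ℕ) : ℝ) / n) ^ 2 = 0 := by
    intro d hd
    rw [mem_Icc] at hd
    rw [Nat.div_eq_zero_iff.mpr (by omega)]
    simp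
  rw [tsum_eq_sum hvanish, card_coprime_pairs_Icc_eq_sum_moebius, sum_div]
  simp only [div_pow, mul_div_assoc]
end

section
/- Let m ≥ 2. For each n ≥ 1, let Xₙ¹, …, Xₙᵐ be independent random variables, each uniform on {1, …, n}; let Zₙ = gcd(Xₙ¹, …, Xₙᵐ) and let Wₙ = r_m(Xₙ¹), where r_m(k) is the largest integer a such that aᵐ divides k. Then both (Zₙ) and (Wₙ) converge in law to the Zeta law of parameter m: for every positive integer k, P(Zₙ = k) → k^{-m}/ζ(m) and P(Wₙ = k) → k^{-m}/ζ(m) as n → ∞. -/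
/-!
For `φ(x) = gcd x` on `{1, …, n}ᵐ`, resp. `φ(x) = r_m(x)` on `{1, …, n}`, the multiples of `c`
among the values of `φ` are easy to count: `c ∣ gcd x` iff `c` divides every coordinate, and
`c ∣ r_m(x)` iff `cᵐ ∣ x`. Möbius inversion over the divisors of `φ(x) / k` gives
`[φ(x) = k] = ∑_d μ(d) [k d ∣ φ(x)]`, hence the counts `∑_{d ≤ n} μ(d) ⌊n / kd⌋ᵐ` and
`∑_{d ≤ n} μ(d) ⌊n / (kd)ᵐ⌋`. After normalisation the `d`-th term tends to `μ(d) / (kd)ᵐ` and is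
dominated by `1 / (kd)ᵐ`, so dominated convergence gives the limit
`k⁻ᵐ ∑_d μ(d) d⁻ᵐ = k⁻ᵐ / ζ(m)`.
-/

open Filter Topology

/-- `r_m k` is the largest integer `a` such that `a ^ m` divides `k` (for `k ≥ 1`). -/
def largestPowerRoot (m k : ℕ) : ℕ := Nat.findGreatest (fun a => a ^ m ∣ k) k

open Finset ArithmeticFunction
open scoped ArithmeticFunction.Moebius

theorem Nat.div_eq_zero_of_lt_of_dvd {n d c : ℕ} (hnd : n < d) (hdc : d ∣ c) : n / c = 0 := by
  rcases c.eq_zero_or_pos with rfl | hc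
  · exact Nat.div_zero n
  · exact Nat.div_eq_of_lt (hnd.trans_le (Nat.le_of_dvd hc hdc))

section Ring

variable {R : Type*} [Ring R]

theorem sum_divisors_moebius (n : ℕ) :
    ∑ d ∈ n.divisors, (μ d : R) = if n = 1 then 1 else 0 := by
  simpa only [coe_zeta_mul_apply, intCoe_apply, one_apply] using
    congrArg (fun f : ArithmeticFunction R => f n) coe_zeta_mul_coe_moebius

theorem ite_eq_sum_moebius {N k g : ℕ} (hg : g ≠ 0) (hgN : g ≤ N) :
    (if g = k then 1 else 0 : R) = ∑ d ∈ Icc 1 N with k * d ∣ g, (μ d : R) := by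
  by_cases hkg : k ∣ g
  · obtain ⟨g', rfl⟩ := hkg
    have hk : k ≠ 0 := left_ne_zero_of_mul hg
    have hg' : g' ≠ 0 := right_ne_zero_of_mul hg
    have hdivisors : {d ∈ Icc 1 N | k * d ∣ k * g'} = g'.divisors := by
      ext d
      simp only [mem_filter, mem_Icc, Nat.mem_divisors,
        Nat.mul_dvd_mul_iff_left (Nat.pos_of_ne_zero hk)]
      constructor
      · exact fun h => ⟨h.2, hg'⟩
      · intro h
        have := Nat.le_of_dvd (Nat.pos_of_ne_zero hg') h.1
        have := Nat.le_mul_of_pos_left g' (Nat.pos_of_ne_zero hk)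
        exact ⟨⟨Nat.pos_of_dvd_of_pos h.1 (Nat.pos_of_ne_zero hg'), by omega⟩, h.1⟩
    simp only [hdivisors, sum_divisors_moebius, Nat.mul_eq_left hk]
  · rw [if_neg (by rintro rfl; exact hkg dvd_rfl), eq_comm]
    exact sum_eq_zero fun d hd => absurd (dvd_of_mul_right_dvd (mem_filter.1 hd).2) hkg

theorem card_filter_eq_sum_moebius {α : Type*} (s : Finset α) (φ : α → ℕ)
    (k N : ℕ) (hφ : ∀ x ∈ s, φ x ≠ 0 ∧ φ x ≤ N) :
    (#{x ∈ s | φ x = k} : R) = ∑ d ∈ Icc 1 N, (μ d : R) * #{x ∈ s | k * d ∣ φ x} := by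
  calc (#{x ∈ s | φ x = k} : R)
      = ∑ x ∈ s, ∑ d ∈ Icc 1 N with k * d ∣ φ x, (μ d : R) := by
        rw [card_filter, Nat.cast_sum]
        refine sum_congr rfl fun x hx => ?_
        rw [← ite_eq_sum_moebius (hφ x hx).1 (hφ x hx).2, Nat.cast_ite, Nat.cast_one, Nat.cast_zero]
    _ = ∑ d ∈ Icc 1 N, (μ d : R) * #{x ∈ s | k * d ∣ φ x} := by
        simp only [sum_filter]
        rw [sum_comm]
        refine sum_congr rfl fun d _ => ?_
        rw [← sum_filter, sum_const, nsmul_eq_mul, Nat.cast_comm]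

theorem Nat.card_filter_Icc_dvd (n c : ℕ) : #{x ∈ Icc 1 n | c ∣ x} = n / c := by
  rw [← Nat.Ioc_filter_dvd_card_eq_div, ← Finset.Icc_add_one_left_eq_Ioc, zero_add]

theorem card_filter_piFinset_dvd_gcd (m n c : ℕ) :
    #{f ∈ Fintype.piFinset fun _ : Fin m => Icc 1 n | c ∣ univ.gcd f} = (n / c) ^ m := by
  have : {f ∈ Fintype.piFinset fun _ : Fin m => Icc 1 n | c ∣ univ.gcd f}
      = Fintype.piFinset fun _ : Fin m => {x ∈ Icc 1 n | c ∣ x} := by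
    ext f
    simp only [mem_filter, Fintype.mem_piFinset, Finset.dvd_gcd_iff, mem_univ, true_imp_iff]
    exact ⟨fun h i => ⟨h.1 i, h.2 i⟩, fun h => ⟨fun i => (h i).1, fun i => (h i).2⟩⟩
  rw [this, Fintype.card_piFinset_const, Nat.card_filter_Icc_dvd]

theorem card_filter_piFinset_gcd_eq {m : ℕ} (hm : m ≠ 0) (n k : ℕ) :
    (#{f ∈ Fintype.piFinset fun _ : Fin m => Icc 1 n | univ.gcd f = k} : R)
      = ∑ d ∈ Icc 1 n, (μ d : R) * ((n / (k * d) : ℕ) : R) ^ m := by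
  rw [card_filter_eq_sum_moebius _ _ k n fun f hf => ?_]
  · simp only [card_filter_piFinset_dvd_gcd, Nat.cast_pow]
  have i : Fin m := ⟨0, Nat.pos_of_ne_zero hm⟩
  have hfi := mem_Icc.1 (Fintype.mem_piFinset.1 hf i)
  have hgcd : univ.gcd f ∣ f i := gcd_dvd (mem_univ i)
  exact ⟨fun h => by rw [h, zero_dvd_iff] at hgcd; omega,
    (Nat.le_of_dvd (by omega) hgcd).trans hfi.2⟩

theorem pow_largestPowerRoot_dvd (m : ℕ) {x : ℕ} (hx : x ≠ 0) : largestPowerRoot m x ^ m ∣ x :=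
  Nat.findGreatest_spec (P := fun a => a ^ m ∣ x) (Nat.one_le_iff_ne_zero.2 hx) (by simp)

theorem largestPowerRoot_pos (m : ℕ) {x : ℕ} (hx : x ≠ 0) : 0 < largestPowerRoot m x :=
  Nat.le_findGreatest (P := fun a => a ^ m ∣ x) (Nat.one_le_iff_ne_zero.2 hx) (by simp)

theorem largestPowerRoot_le (m x : ℕ) : largestPowerRoot m x ≤ x := Nat.findGreatest_le x

theorem dvd_largestPowerRoot_iff {m x a : ℕ} (hm : m ≠ 0) (hx : x ≠ 0) :
    a ∣ largestPowerRoot m x ↔ a ^ m ∣ x := by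
  set r := largestPowerRoot m x
  refine ⟨fun h => (pow_dvd_pow_of_dvd h m).trans (pow_largestPowerRoot_dvd m hx), fun ha => ?_⟩
  have ha0 : a ≠ 0 := by rintro rfl; simp [zero_pow hm, hx] at ha
  have hl0 : Nat.lcm a r ≠ 0 := Nat.lcm_ne_zero ha0 (largestPowerRoot_pos m hx).ne'
  -- `lcm a r` is another candidate, so maximality of `r` forces `lcm a r = r`
  have hl : Nat.lcm a r ^ m ∣ x := by
    rw [← Nat.pow_lcm_pow]
    exact Nat.lcm_dvd ha (pow_largestPowerRoot_dvd m hx)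
  have hlr : Nat.lcm a r ≤ r :=
    Nat.le_findGreatest ((Nat.le_self_pow hm _).trans (Nat.le_of_dvd (by omega) hl)) hl
  have : Nat.lcm a r = r := le_antisymm hlr (Nat.le_of_dvd (by omega) (Nat.dvd_lcm_right a r))
  exact this ▸ Nat.dvd_lcm_left a r

theorem card_filter_largestPowerRoot_eq {m : ℕ} (hm : m ≠ 0) (n k : ℕ) :
    (#{x ∈ Icc 1 n | largestPowerRoot m x = k} : R)
      = ∑ d ∈ Icc 1 n, (μ d : R) * (n / (k * d) ^ m : ℕ) := by
  have hx : ∀ x ∈ Icc 1 n, x ≠ 0 := fun x hx => by simp at hx; omega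
  rw [card_filter_eq_sum_moebius _ _ k n fun x hx' =>
    ⟨(largestPowerRoot_pos m (hx x hx')).ne', (largestPowerRoot_le m x).trans (mem_Icc.1 hx').2⟩]
  refine sum_congr rfl fun d _ => ?_
  rw [filter_congr fun x hx' => dvd_largestPowerRoot_iff hm (hx x hx'), Nat.card_filter_Icc_dvd]

end Ring

theorem natCast_div_div_self_le (n c : ℕ) : ((n / c : ℕ) : ℝ) / n ≤ 1 / c := by
  rcases n.eq_zero_or_pos with rfl | hn
  · simp
  · calc ((n / c : ℕ) : ℝ) / n ≤ (n / c : ℝ) / n := by gcongr; exact Nat.cast_div_le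
      _ = 1 / c := by field_simp

theorem tendsto_natCast_div_div_self_atTop (c : ℕ) :
    Tendsto (fun n : ℕ => ((n / c : ℕ) : ℝ) / n) atTop (𝓝 (1 / c)) := by
  rcases c.eq_zero_or_pos with rfl | hc
  · simp
  have hc' : (0 : ℝ) < c := Nat.cast_pos.2 hc
  have h := ((tendsto_nat_floor_div_atTop (R := ℝ)).comp
    (tendsto_natCast_atTop_atTop.atTop_div_const hc')).div_const (c : ℝ)
  refine h.congr' ?_
  filter_upwards [eventually_ne_atTop 0] with n hn
  simp only [Function.comp_apply, Nat.floor_div_eq_div]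
  field_simp

theorem zetaSum_natCast (m : ℕ) : zetaSum m = ∑' n : ℕ, 1 / (n : ℝ) ^ m := by
  simp only [zetaSum, Real.rpow_neg (Nat.cast_nonneg _), Real.rpow_natCast, one_div]

theorem LSeries_ofReal_natCast {m : ℕ} (hm : m ≠ 0) (f : ℕ → ℝ) :
    LSeries (fun n => (f n : ℂ)) m = ((∑' n : ℕ, f n / (n : ℝ) ^ m : ℝ) : ℂ) := by
  rw [LSeries, Complex.ofReal_tsum]
  refine tsum_congr fun n => ?_
  rcases eq_or_ne n 0 with rfl | hn
  · simp [hm]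
  · rw [LSeries.term_of_ne_zero hn, Complex.cpow_natCast]
    push_cast
    rfl

theorem tsum_moebius_div_pow {m : ℕ} (hm : 1 < m) :
    ∑' d : ℕ, (μ d : ℝ) / (d : ℝ) ^ m = (zetaSum m)⁻¹ := by
  have h := LSeries_one_mul_Lseries_moebius (s := m) (by simpa using hm)
  have h1 := LSeries_ofReal_natCast (by omega : m ≠ 0) 1
  have hμ := LSeries_ofReal_natCast (by omega : m ≠ 0) fun d => (μ d : ℝ)
  simp only [Pi.one_apply, Complex.ofReal_one, Complex.ofReal_intCast] at h1 hμ
  rw [show (1 : ℕ → ℂ) = fun _ => 1 from rfl, h1, hμ, ← zetaSum_natCast] at h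
  exact eq_inv_of_mul_eq_one_right (by exact_mod_cast h)

theorem summable_one_div_natCast_mul_pow {m : ℕ} (hm : 1 < m) (k : ℕ) :
    Summable fun d : ℕ => 1 / ((k * d : ℕ) : ℝ) ^ m := by
  simpa only [Nat.cast_mul, mul_pow, one_div_mul_one_div] using
    (Real.summable_one_div_nat_pow.2 hm).mul_left (1 / (k : ℝ) ^ m)

theorem tsum_moebius_mul_one_div_natCast_mul_pow {m : ℕ} (hm : 1 < m) (k : ℕ) :
    ∑' d : ℕ, (μ d : ℝ) * (1 / ((k * d : ℕ) : ℝ) ^ m) = 1 / (k : ℝ) ^ m / zetaSum m := by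
  have h : ∀ d : ℕ, (μ d : ℝ) * (1 / ((k * d : ℕ) : ℝ) ^ m)
      = 1 / (k : ℝ) ^ m * ((μ d : ℝ) / (d : ℝ) ^ m) := fun d => by push_cast; ring
  rw [tsum_congr h, tsum_mul_left, tsum_moebius_div_pow hm, ← div_eq_mul_inv]

theorem tendsto_sum_Icc_moebius_mul {a : ℕ → ℕ → ℝ} {b : ℕ → ℝ} (hb : Summable b)
    (hab : ∀ n d, |a n d| ≤ b d) (hlim : ∀ d, 0 < d → Tendsto (a · d) atTop (𝓝 (b d)))
    (hvanish : ∀ n d, n < d → a n d = 0) :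
    Tendsto (fun n => ∑ d ∈ Icc 1 n, μ d * a n d) atTop (𝓝 (∑' d, μ d * b d)) := by
  have hμ : ∀ d, |(μ d : ℝ)| ≤ 1 := fun d => by exact_mod_cast abs_moebius_le_one
  have htsum : Tendsto (fun n => ∑' d, μ d * a n d) atTop (𝓝 (∑' d, μ d * b d)) := by
    refine tendsto_tsum_of_dominated_convergence hb (fun d => ?_) (Eventually.of_forall
      fun n d => ?_)
    · rcases d.eq_zero_or_pos with rfl | hd
      · simp
      · exact (hlim d hd).const_mul _
    · rw [Real.norm_eq_abs, abs_mul]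
      exact (mul_le_of_le_one_left (abs_nonneg _) (hμ d)).trans (hab n d)
  refine htsum.congr fun n => tsum_eq_sum fun d hd => ?_
  obtain rfl | hnd : d = 0 ∨ n < d := by simp only [mem_Icc, not_and_or] at hd; omega
  · simp
  · rw [hvanish n d hnd, mul_zero]

theorem gcd_and_largest_power_root_tendsto_zeta_general (m : ℕ) (hm : 2 ≤ m) (k : ℕ) :
    Tendsto (fun n : ℕ =>
        (((Fintype.piFinset fun _ : Fin m => Finset.Icc 1 n).filter
            fun f => Finset.univ.gcd f = k).card : ℝ) / (n : ℝ) ^ m)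
      atTop (𝓝 ((1 / (k : ℝ) ^ m) / zetaSum m)) ∧
    Tendsto (fun n : ℕ =>
        (((Finset.Icc 1 n).filter fun x => largestPowerRoot m x = k).card : ℝ) / (n : ℝ))
      atTop (𝓝 ((1 / (k : ℝ) ^ m) / zetaSum m)) := by
  have hm0 : m ≠ 0 := by omega
  have hb := summable_one_div_natCast_mul_pow hm k
  rw [← tsum_moebius_mul_one_div_natCast_mul_pow hm k]
  constructor
  · refine (tendsto_sum_Icc_moebius_mul (a := fun n d => (((n / (k * d) : ℕ) : ℝ) / n) ^ m) hb
      (fun n d => ?_) (fun d _ => ?_) (fun n d hnd => ?_)).congr fun n => ?_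
    · rw [abs_of_nonneg (by positivity), ← one_div_pow]
      exact pow_le_pow_left₀ (by positivity) (natCast_div_div_self_le n _) m
    · simpa only [one_div_pow] using (tendsto_natCast_div_div_self_atTop (k * d)).pow m
    · simp [Nat.div_eq_zero_of_lt_of_dvd hnd (dvd_mul_left d k), hm0]
    · simp only [card_filter_piFinset_gcd_eq hm0, sum_div, div_pow, mul_div_assoc]
  · refine (tendsto_sum_Icc_moebius_mul (a := fun n d => ((n / (k * d) ^ m : ℕ) : ℝ) / n) hb
      (fun n d => ?_) (fun d _ => ?_) (fun n d hnd => ?_)).congr fun n => ?_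
    · rw [abs_of_nonneg (by positivity), ← Nat.cast_pow]
      exact natCast_div_div_self_le n _
    · simpa only [Nat.cast_pow] using tendsto_natCast_div_div_self_atTop ((k * d) ^ m)
    · simp [Nat.div_eq_zero_of_lt_of_dvd hnd ((dvd_mul_left d k).pow hm0)]
    · simp only [card_filter_largestPowerRoot_eq hm0, sum_div, mul_div_assoc]

/-- Let `m ≥ 2` and let `Xₙ¹, …, Xₙᵐ` be independent, uniform on `{1, …, n}`; let
`Zₙ = gcd (Xₙ¹, …, Xₙᵐ)` and `Wₙ = r_m (Xₙ¹)` where `r_m k` is the largest `a` with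
`a ^ m ∣ k`. Then both `Zₙ` and `Wₙ` converge in law to the Zeta law of parameter `m`:
for every `k ≥ 1`, `P(Zₙ = k) → k^(-m) / ζ(m)` and `P(Wₙ = k) → k^(-m) / ζ(m)`. -/
theorem gcd_and_largest_power_root_tendsto_zeta (m : ℕ) (hm : 2 ≤ m) (k : ℕ) (hk : 1 ≤ k) :
    Tendsto (fun n : ℕ =>
        (((Fintype.piFinset fun _ : Fin m => Finset.Icc 1 n).filter
            fun f => Finset.univ.gcd f = k).card : ℝ) / (n : ℝ) ^ m)
      atTop (𝓝 ((1 / (k : ℝ) ^ m) / zetaSum m)) ∧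
    Tendsto (fun n : ℕ =>
        (((Finset.Icc 1 n).filter fun x => largestPowerRoot m x = k).card : ℝ) / (n : ℝ))
      atTop (𝓝 ((1 / (k : ℝ) ^ m) / zetaSum m)) :=
  gcd_and_largest_power_root_tendsto_zeta_general m hm k
end
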